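/- Let α, β, γ : ℝ → ℝ be differentiable and let O(t) be the 3×3 orthogonal matrix with Euler angles α(t), β(t), γ(t): O = [[cosα·cosβ − sinα·sinβ·cosγ, −cosα·sinβ − sinα·cosβ·cosγ, sinα·sinγ], [sinα·cosβ + cosα·sinβ·cosγ, −sinα·sinβ + cosα·cosβ·cosγ, −cosα·sinγ], [sinβ·sinγ, cosβ·sinγ, cosγ]]. Define the angular velocity vector Ω(t) = (γ'·cosα + β'·sinα·sinγ, γ'·sinα − β'·cosα·sinγ, α' + β'·cosγ). Then for all t ∈ ℝ and x ∈ ℝ³, O'(t)·O(t)ᵀ·x = Ω(t) × x. Consequently, for e ≠ 0 the vector field A(t,x) = −(1/(2e))·O'(t)·O(t)ᵀ·x has spatial curl equal to H(t) := −(1/e)·Ω(t); i.e. the magnetic field H of the separable Pauli equation and the angular velocity Ω of the rotation of the separation coordinate system satisfy e·H(t) = −Ω(t). -/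

import Mathlib

/-!
Factor the Euler rotation as `O = R_z(α) R_x(γ) R_z(β)`. If `A' = [u]× A` and `B' = [v]× B` with
`A` orthogonal, then `(AB)' = ([u]× + A [v]× Aᵀ) AB`, and conjugating a cross-product matrix by a
rotation rotates its axis: `R [v]× Rᵀ = [R v]×`. Hence `O' Oᵀ = [Ω]×` with
`Ω = α' e_z + γ' R_z(α) e_x + β' R_z(α) R_x(γ) e_z`, the sum of the three elementary angular
velocities expressed in the fixed frame. The curl of the linear field `x ↦ c [Ω]× x` is `2 c Ω`.
-/

open Matrix Real

/-- Partial derivative `∂_{x_b} f (x)` of a real-valued function on `ℝ³`. -/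
noncomputable def pdR (b : Fin 3) (f : (Fin 3 → ℝ) → ℝ) (x : Fin 3 → ℝ) : ℝ :=
  fderiv ℝ f x (Pi.single b 1)

/-- The curl of a vector field on `ℝ³`. -/
noncomputable def curl3 (B : (Fin 3 → ℝ) → Fin 3 → ℝ) (x : Fin 3 → ℝ) : Fin 3 → ℝ :=
  ![pdR 1 (fun y => B y 2) x - pdR 2 (fun y => B y 1) x,
    pdR 2 (fun y => B y 0) x - pdR 0 (fun y => B y 2) x,
    pdR 0 (fun y => B y 1) x - pdR 1 (fun y => B y 0) x]

/-- Cross product of two vectors in `ℝ³`. -/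
def cross3 (a x : Fin 3 → ℝ) : Fin 3 → ℝ :=
  ![a 1 * x 2 - a 2 * x 1, a 2 * x 0 - a 0 * x 2, a 0 * x 1 - a 1 * x 0]

/-- The 3×3 orthogonal matrix with Euler angles `a`, `b`, `g`. -/
noncomputable def eulerO (a b g : ℝ) : Matrix (Fin 3) (Fin 3) ℝ :=
  !![cos a * cos b - sin a * sin b * cos g,
       -(cos a * sin b) - sin a * cos b * cos g,  sin a * sin g;
     sin a * cos b + cos a * sin b * cos g,
       -(sin a * sin b) + cos a * cos b * cos g, -(cos a * sin g);
     sin b * sin g, cos b * sin g, cos g]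

section EntrywiseDeriv

variable {m n p : Type*}

def HasEntrywiseDerivAt (M : ℝ → Matrix m n ℝ) (M' : Matrix m n ℝ) (t : ℝ) : Prop :=
  ∀ i j, HasDerivAt (fun s => M s i j) (M' i j) t

theorem HasEntrywiseDerivAt.deriv {M : ℝ → Matrix m n ℝ} {M' : Matrix m n ℝ} {t : ℝ}
    (hM : HasEntrywiseDerivAt M M' t) :
    (Matrix.of fun i j => deriv (fun s => M s i j) t) = M' :=
  Matrix.ext fun i j => (hM i j).deriv

theorem HasEntrywiseDerivAt.mul [Fintype n] {A : ℝ → Matrix m n ℝ} {B : ℝ → Matrix n p ℝ}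
    {A' : Matrix m n ℝ} {B' : Matrix n p ℝ} {t : ℝ}
    (hA : HasEntrywiseDerivAt A A' t) (hB : HasEntrywiseDerivAt B B' t) :
    HasEntrywiseDerivAt (fun s => A s * B s) (A' * B t + A t * B') t := by
  intro i j
  simp only [Matrix.mul_apply, Matrix.add_apply, ← Finset.sum_add_distrib]
  exact HasDerivAt.fun_sum fun k _ => (hA i k).mul (hB k j)

theorem HasEntrywiseDerivAt.mul_of_mem_orthogonalGroup [Fintype n] [DecidableEq n]
    {A B : ℝ → Matrix n n ℝ} {W V : Matrix n n ℝ} {t : ℝ}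
    (hA : HasEntrywiseDerivAt A (W * A t) t) (hB : HasEntrywiseDerivAt B (V * B t) t)
    (hAt : A t ∈ Matrix.orthogonalGroup n ℝ) :
    HasEntrywiseDerivAt (fun s => A s * B s) ((W + A t * V * (A t)ᵀ) * (A t * B t)) t := by
  convert hA.mul hB using 1
  have horth : (A t)ᵀ * A t = 1 := (Matrix.mem_orthogonalGroup_iff' n ℝ).mp hAt
  calc (W + A t * V * (A t)ᵀ) * (A t * B t)
      = W * A t * B t + A t * V * ((A t)ᵀ * A t) * B t := by noncomm_ring
    _ = _ := by rw [horth]; noncomm_ring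

end EntrywiseDeriv

def crossMatrix (w : Fin 3 → ℝ) : Matrix (Fin 3) (Fin 3) ℝ :=
  !![0, -w 2, w 1; w 2, 0, -w 0; -w 1, w 0, 0]

theorem crossMatrix_mulVec (w x : Fin 3 → ℝ) : crossMatrix w *ᵥ x = cross3 w x := by
  ext i; fin_cases i <;>
    simp [crossMatrix, cross3, Matrix.mulVec, dotProduct, Fin.sum_univ_three] <;> ring

theorem crossMatrix_add (u v : Fin 3 → ℝ) :
    crossMatrix (u + v) = crossMatrix u + crossMatrix v := by
  ext i j; fin_cases i <;> fin_cases j <;> simp [crossMatrix] <;> ring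

noncomputable def rotZ (a : ℝ) : Matrix (Fin 3) (Fin 3) ℝ :=
  !![cos a, -sin a, 0; sin a, cos a, 0; 0, 0, 1]

noncomputable def rotX (a : ℝ) : Matrix (Fin 3) (Fin 3) ℝ :=
  !![1, 0, 0; 0, cos a, -sin a; 0, sin a, cos a]

theorem eulerO_eq_rotZ_mul_rotX_mul_rotZ (a b g : ℝ) :
    eulerO a b g = rotZ a * rotX g * rotZ b := by
  ext i j; fin_cases i <;> fin_cases j <;>
    simp [eulerO, rotZ, rotX, Matrix.mul_apply, Fin.sum_univ_three] <;> ring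

theorem rotZ_mem_orthogonalGroup (a : ℝ) : rotZ a ∈ Matrix.orthogonalGroup (Fin 3) ℝ := by
  rw [Matrix.mem_orthogonalGroup_iff]
  ext i j; fin_cases i <;> fin_cases j <;>
    simp [rotZ, Matrix.mul_apply, Fin.sum_univ_three] <;> grind [sin_sq_add_cos_sq]

theorem rotX_mem_orthogonalGroup (a : ℝ) : rotX a ∈ Matrix.orthogonalGroup (Fin 3) ℝ := by
  rw [Matrix.mem_orthogonalGroup_iff]
  ext i j; fin_cases i <;> fin_cases j <;>
    simp [rotX, Matrix.mul_apply, Fin.sum_univ_three] <;> grind [sin_sq_add_cos_sq]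

theorem eulerO_mem_orthogonalGroup (a b g : ℝ) :
    eulerO a b g ∈ Matrix.orthogonalGroup (Fin 3) ℝ := by
  rw [eulerO_eq_rotZ_mul_rotX_mul_rotZ]
  exact Submonoid.mul_mem _ (Submonoid.mul_mem _ (rotZ_mem_orthogonalGroup a)
    (rotX_mem_orthogonalGroup g)) (rotZ_mem_orthogonalGroup b)

theorem rotZ_mul_crossMatrix_mul_transpose (a : ℝ) (w : Fin 3 → ℝ) :
    rotZ a * crossMatrix w * (rotZ a)ᵀ = crossMatrix (rotZ a *ᵥ w) := by
  ext i j; fin_cases i <;> fin_cases j <;>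
    simp [rotZ, crossMatrix, Matrix.mul_apply, Matrix.mulVec, dotProduct, Fin.sum_univ_three] <;>
    grind [sin_sq_add_cos_sq]

theorem rotX_mul_crossMatrix_mul_transpose (a : ℝ) (w : Fin 3 → ℝ) :
    rotX a * crossMatrix w * (rotX a)ᵀ = crossMatrix (rotX a *ᵥ w) := by
  ext i j; fin_cases i <;> fin_cases j <;>
    simp [rotX, crossMatrix, Matrix.mul_apply, Matrix.mulVec, dotProduct, Fin.sum_univ_three] <;>
    grind [sin_sq_add_cos_sq]

theorem hasEntrywiseDerivAt_rotZ {f : ℝ → ℝ} {f' t : ℝ} (hf : HasDerivAt f f' t) :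
    HasEntrywiseDerivAt (fun s => rotZ (f s)) (crossMatrix ![0, 0, f'] * rotZ (f t)) t := by
  intro i j; fin_cases i <;> fin_cases j <;>
    simp [rotZ, crossMatrix, Matrix.mul_apply, Fin.sum_univ_three] <;>
    first
      | exact hasDerivAt_const t _
      | exact hf.cos.congr_deriv (by ring)
      | exact hf.sin.congr_deriv (by ring)
      | exact hf.sin.neg.congr_deriv (by ring)

theorem hasEntrywiseDerivAt_rotX {f : ℝ → ℝ} {f' t : ℝ} (hf : HasDerivAt f f' t) :
    HasEntrywiseDerivAt (fun s => rotX (f s)) (crossMatrix ![f', 0, 0] * rotX (f t)) t := by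
  intro i j; fin_cases i <;> fin_cases j <;>
    simp [rotX, crossMatrix, Matrix.mul_apply, Fin.sum_univ_three] <;>
    first
      | exact hasDerivAt_const t _
      | exact hf.cos.congr_deriv (by ring)
      | exact hf.sin.congr_deriv (by ring)
      | exact hf.sin.neg.congr_deriv (by ring)

theorem hasEntrywiseDerivAt_eulerO {α β γ : ℝ → ℝ} {α' β' γ' t : ℝ} (hα : HasDerivAt α α' t)
    (hβ : HasDerivAt β β' t) (hγ : HasDerivAt γ γ' t) :
    HasEntrywiseDerivAt (fun s => eulerO (α s) (β s) (γ s))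
      (crossMatrix ![γ' * cos (α t) + β' * sin (α t) * sin (γ t),
          γ' * sin (α t) - β' * cos (α t) * sin (γ t), α' + β' * cos (γ t)] *
        eulerO (α t) (β t) (γ t)) t := by
  have hZX := (hasEntrywiseDerivAt_rotZ hα).mul_of_mem_orthogonalGroup
    (hasEntrywiseDerivAt_rotX hγ) (rotZ_mem_orthogonalGroup _)
  have hZXZ := hZX.mul_of_mem_orthogonalGroup (hasEntrywiseDerivAt_rotZ hβ)
    (Submonoid.mul_mem _ (rotZ_mem_orthogonalGroup _) (rotX_mem_orthogonalGroup _))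
  simp only [eulerO_eq_rotZ_mul_rotX_mul_rotZ]
  convert hZXZ using 2
  rw [Matrix.transpose_mul, show ∀ A B C : Matrix (Fin 3) (Fin 3) ℝ,
      A * B * C * (Bᵀ * Aᵀ) = A * (B * C * Bᵀ) * Aᵀ by simp [Matrix.mul_assoc]]
  simp only [rotX_mul_crossMatrix_mul_transpose, rotZ_mul_crossMatrix_mul_transpose,
    ← crossMatrix_add]
  congr 1
  ext i; fin_cases i <;>
    simp [rotZ, rotX, dotProduct, Fin.sum_univ_three, vecHead, vecTail] <;> ring

theorem pdR_mulVec (M : Matrix (Fin 3) (Fin 3) ℝ) (b i : Fin 3) (x : Fin 3 → ℝ) :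
    pdR b (fun y => (M *ᵥ y) i) x = M i b := by
  let L : (Fin 3 → ℝ) →L[ℝ] ℝ :=
    (LinearMap.proj i ∘ₗ Matrix.mulVecLin M).toContinuousLinearMap
  rw [pdR, show (fun y => (M *ᵥ y) i) = L from rfl, L.fderiv]
  simp [L]

theorem curl3_mulVec (M : Matrix (Fin 3) (Fin 3) ℝ) (x : Fin 3 → ℝ) :
    curl3 (fun y => M *ᵥ y) x = ![M 2 1 - M 1 2, M 0 2 - M 2 0, M 1 0 - M 0 1] := by
  simp only [curl3, pdR_mulVec]

theorem curl3_smul_crossMatrix_mulVec (c : ℝ) (w x : Fin 3 → ℝ) :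
    curl3 (fun y => c • crossMatrix w *ᵥ y) x = (2 * c) • w := by
  simp_rw [← Matrix.smul_mulVec, curl3_mulVec]
  ext i; fin_cases i <;> simp [crossMatrix] <;> ring

theorem angular_velocity_eq_neg_eH_general
    (e : ℝ) (α β γ : ℝ → ℝ)
    (hα : Differentiable ℝ α) (hβ : Differentiable ℝ β) (hγ : Differentiable ℝ γ) :
    (∀ (t : ℝ) (x : Fin 3 → ℝ),
      ((Matrix.of fun i j => deriv (fun s => eulerO (α s) (β s) (γ s) i j) t)
          * (eulerO (α t) (β t) (γ t))ᵀ).mulVec x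
        = cross3
            ![deriv γ t * cos (α t) + deriv β t * sin (α t) * sin (γ t),
              deriv γ t * sin (α t) - deriv β t * cos (α t) * sin (γ t),
              deriv α t + deriv β t * cos (γ t)] x)
    ∧ (∀ (t : ℝ) (x : Fin 3 → ℝ),
        curl3 (fun y =>
          (-(1 / (2 * e))) •
            ((Matrix.of fun i j => deriv (fun s => eulerO (α s) (β s) (γ s) i j) t)
              * (eulerO (α t) (β t) (γ t))ᵀ).mulVec y) x
        = (-(1 / e)) •
            ![deriv γ t * cos (α t) + deriv β t * sin (α t) * sin (γ t),
              deriv γ t * sin (α t) - deriv β t * cos (α t) * sin (γ t),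
              deriv α t + deriv β t * cos (γ t)]) := by
  have hΩ : ∀ t, (Matrix.of fun i j => deriv (fun s => eulerO (α s) (β s) (γ s) i j) t)
      * (eulerO (α t) (β t) (γ t))ᵀ
        = crossMatrix ![deriv γ t * cos (α t) + deriv β t * sin (α t) * sin (γ t),
            deriv γ t * sin (α t) - deriv β t * cos (α t) * sin (γ t),
            deriv α t + deriv β t * cos (γ t)] := fun t => by
    rw [(hasEntrywiseDerivAt_eulerO (hα t).hasDerivAt (hβ t).hasDerivAt
      (hγ t).hasDerivAt).deriv, Matrix.mul_assoc,
      (Matrix.mem_orthogonalGroup_iff _ ℝ).mp (eulerO_mem_orthogonalGroup _ _ _), Matrix.mul_one]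
  refine ⟨fun t x => by rw [hΩ, crossMatrix_mulVec], fun t x => ?_⟩
  rw [hΩ, curl3_smul_crossMatrix_mulVec]
  congr 1
  ring

/-- for the Euler-angle rotation matrix `O(t)` one has
`Ȯ(t)O(t)ᵀ x = Ω(t) × x` with `Ω` the angular velocity vector, and for `e ≠ 0`
the vector potential `A(t,x) = -(1/(2e)) Ȯ O ᵀ x` has spatial curl
`H(t) = -(1/e)·Ω(t)`, i.e. `e·H = -Ω`. -/
theorem angular_velocity_eq_neg_eH
    (e : ℝ) (he : e ≠ 0) (α β γ : ℝ → ℝ)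
    (hα : Differentiable ℝ α) (hβ : Differentiable ℝ β) (hγ : Differentiable ℝ γ) :
    (∀ (t : ℝ) (x : Fin 3 → ℝ),
      ((Matrix.of fun i j => deriv (fun s => eulerO (α s) (β s) (γ s) i j) t)
          * (eulerO (α t) (β t) (γ t))ᵀ).mulVec x
        = cross3
            ![deriv γ t * cos (α t) + deriv β t * sin (α t) * sin (γ t),
              deriv γ t * sin (α t) - deriv β t * cos (α t) * sin (γ t),
              deriv α t + deriv β t * cos (γ t)] x)
    ∧ (∀ (t : ℝ) (x : Fin 3 → ℝ),
        curl3 (fun y =>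
          (-(1 / (2 * e))) •
            ((Matrix.of fun i j => deriv (fun s => eulerO (α s) (β s) (γ s) i j) t)
              * (eulerO (α t) (β t) (γ t))ᵀ).mulVec y) x
        = (-(1 / e)) •
            ![deriv γ t * cos (α t) + deriv β t * sin (α t) * sin (γ t),
              deriv γ t * sin (α t) - deriv β t * cos (α t) * sin (γ t),
              deriv α t + deriv β t * cos (γ t)]) :=
  angular_velocity_eq_neg_eH_general e α β γ hα hβ hγ
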